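/- arXiv:1304.6839 — 8 statements merged into one kernel-verified Lean document; each statement's English description precedes it below -/
import Mathlib

section
/- For every integer k ≥ 3 and every integer d ≥ 2, and every r with 1 ≤ r ≤ d, the polynomial f_r(λ) = (λ−d)(1−λ)^{k−1} + r has a real root λ with λ ≠ 1. -/
/-!
Evaluate `f_r(λ) = (λ - d)(1 - λ)^(k-1) + r` at the ends of `[0, 1]`: `f_r(0) = r - d ≤ 0` and,
as `k - 1 ≥ 1`, `f_r(1) = r > 0`. The intermediate value theorem gives a root in `[0, 1)`.
-/

theorem exists_root_mem_Ico_of_le {k : ℕ} {d r : ℝ} (hk : 2 ≤ k) (hr : 0 < r) (hrd : r ≤ d) :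
    ∃ lam ∈ Set.Ico (0 : ℝ) 1, (lam - d) * (1 - lam) ^ (k - 1) + r = 0 := by
  set f : ℝ → ℝ := fun x => (x - d) * (1 - x) ^ (k - 1) + r
  have hf_zero : f 0 = r - d := by simp only [f, zero_sub, sub_zero, one_pow, mul_one]; ring
  have hf_one : f 1 = r := by simp [f, zero_pow (by omega : k - 1 ≠ 0)]
  have hzero_mem : (0 : ℝ) ∈ Set.Ico (f 0) (f 1) := by
    rw [hf_zero, hf_one]
    exact ⟨by linarith, hr⟩
  exact intermediate_value_Ico zero_le_one (by fun_prop) hzero_mem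

theorem stmt_3_general (k d r : ℕ) (hk : 3 ≤ k) (hr1 : 1 ≤ r) (hrd : r ≤ d) :
    ∃ lam : ℝ, lam ≠ 1 ∧ (lam - d) * (1 - lam) ^ (k - 1) + r = 0 := by
  obtain ⟨lam, ⟨-, hlt⟩, hroot⟩ :=
    exists_root_mem_Ico_of_le (k := k) (d := d) (r := r) (by omega) (by exact_mod_cast hr1)
      (by exact_mod_cast hrd)
  exact ⟨lam, hlt.ne, hroot⟩

theorem stmt_3 (k d r : ℕ) (hk : 3 ≤ k) (hd : 2 ≤ d) (hr1 : 1 ≤ r) (hrd : r ≤ d) :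
    ∃ lam : ℝ, lam ≠ 1 ∧ (lam - d) * (1 - lam) ^ (k - 1) + r = 0 :=
  stmt_3_general k d r hk hr1 hrd
end

section
/- Let k ≥ 3 and d ≥ 2 be integers with k even. If λ_k denotes the unique root greater than d of (λ−d)(1−λ)^{k−1} + d = 0, then λ_{k+2} < λ_k; i.e., the sequence of largest Laplacian H-eigenvalues of even-uniform hyperstars of fixed size d is strictly decreasing in k. -/
/-!
Write `f_k(x) = (x - d)(1 - x)^(k-1) + d`. Since `f_{k+2}(x) - d = (f_k(x) - d)(1 - x)^2`, at the
root `λ_k > d ≥ 2` we get `f_{k+2}(λ_k) = d (1 - (λ_k - 1)^2) < 0`, while `f_{k+2}(d) = d > 0`.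
By the intermediate value theorem `f_{k+2}` has a root in `(d, λ_k)`, and by uniqueness this root
is `λ_{k+2}`.
-/

namespace Hyperstar

def charPoly (k : ℕ) (d x : ℝ) : ℝ := (x - d) * (1 - x) ^ (k - 1) + d

lemma charPoly_self (k : ℕ) (d : ℝ) : charPoly k d d = d := by
  simp [charPoly]

lemma continuous_charPoly (k : ℕ) (d : ℝ) : Continuous (charPoly k d) := by
  unfold charPoly; fun_prop

lemma charPoly_add_two {k : ℕ} (hk : 1 ≤ k) (d x : ℝ) :
    charPoly (k + 2) d x = (charPoly k d x - d) * (1 - x) ^ 2 + d := by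
  obtain ⟨j, rfl⟩ := Nat.exists_eq_add_of_le hk
  simp only [charPoly, Nat.add_sub_cancel_left, show 1 + j + 2 - 1 = j + 2 by omega, pow_add]
  ring

lemma charPoly_add_two_neg_of_root {k : ℕ} (hk : 1 ≤ k) {d x : ℝ} (hd : 0 < d) (hx : 2 < x)
    (hroot : charPoly k d x = 0) : charPoly (k + 2) d x < 0 := by
  have hsq : 1 < (1 - x) ^ 2 := by nlinarith
  rw [charPoly_add_two hk, hroot]
  nlinarith

lemma exists_root_charPoly_mem_Ioo {k : ℕ} {d x : ℝ} (hd : 0 < d) (hdx : d < x)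
    (hneg : charPoly k d x < 0) : ∃ μ ∈ Set.Ioo d x, charPoly k d μ = 0 := by
  have h0 : (0 : ℝ) ∈ Set.Ioo (charPoly k d x) (charPoly k d d) :=
    ⟨hneg, by rwa [charPoly_self]⟩
  exact intermediate_value_Ioo' hdx.le (continuous_charPoly k d).continuousOn h0

end Hyperstar

theorem stmt_5_general (k d : ℕ) (hk : 3 ≤ k) (hd : 2 ≤ d)
    (lamk lamk2 : ℝ)
    (hk1 : (d : ℝ) < lamk) (hk2 : (lamk - d) * (1 - lamk) ^ (k - 1) + d = 0)
    (hkuniq' : ∀ μ : ℝ, (d : ℝ) < μ → (μ - d) * (1 - μ) ^ (k + 2 - 1) + d = 0 → μ = lamk2) :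
    lamk2 < lamk := by
  have hd2 : (2 : ℝ) ≤ d := by exact_mod_cast hd
  have hneg : Hyperstar.charPoly (k + 2) d lamk < 0 :=
    Hyperstar.charPoly_add_two_neg_of_root (by omega) (by linarith) (by linarith) hk2
  obtain ⟨μ, ⟨hdμ, hμlam⟩, hμ⟩ := Hyperstar.exists_root_charPoly_mem_Ioo (by linarith) hk1 hneg
  rwa [← hkuniq' μ hdμ hμ]

theorem stmt_5 (k d : ℕ) (hk : 3 ≤ k) (hke : Even k) (hd : 2 ≤ d)
    (lamk lamk2 : ℝ)
    (hk1 : (d : ℝ) < lamk) (hk2 : (lamk - d) * (1 - lamk) ^ (k - 1) + d = 0)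
    (hkuniq : ∀ μ : ℝ, (d : ℝ) < μ → (μ - d) * (1 - μ) ^ (k - 1) + d = 0 → μ = lamk)
    (hk1' : (d : ℝ) < lamk2) (hk2' : (lamk2 - d) * (1 - lamk2) ^ (k + 2 - 1) + d = 0)
    (hkuniq' : ∀ μ : ℝ, (d : ℝ) < μ → (μ - d) * (1 - μ) ^ (k + 2 - 1) + d = 0 → μ = lamk2) :
    lamk2 < lamk :=
  stmt_5_general k d hk hd lamk lamk2 hk1 hk2 hkuniq'
end

section
/- For every odd integer k ≥ 3, the equation (λ−2)^2(1−λ)^{k−2} − 2·4^{1/k} = 0 has a unique real root, and this root lies in the open interval (0,1). -/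
theorem stmt_8 (k : ℕ) (hk : 3 ≤ k) (hko : Odd k) :
    ∃ lam : ℝ, 0 < lam ∧ lam < 1 ∧
      (lam - 2) ^ 2 * (1 - lam) ^ (k - 2) - 2 * (4 : ℝ) ^ ((1 : ℝ) / (k : ℝ)) = 0 ∧
      ∀ μ : ℝ, (μ - 2) ^ 2 * (1 - μ) ^ (k - 2) - 2 * (4 : ℝ) ^ ((1 : ℝ) / (k : ℝ)) = 0 → μ = lam := by
  set c : ℝ := 2 * (4 : ℝ) ^ ((1 : ℝ) / (k : ℝ)) with hc
  set g : ℝ → ℝ := fun x => (x - 2) ^ 2 * (1 - x) ^ (k - 2) with hg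
  have hk2 : 1 ≤ k - 2 := by omega
  have hk2ne : k - 2 ≠ 0 := by omega
  have hodd : Odd (k - 2) := Nat.Odd.sub_even (by omega) hko (by norm_num)
  have hcpos : 0 < c := by
    have : (0:ℝ) < (4:ℝ) ^ ((1 : ℝ) / (k : ℝ)) := Real.rpow_pos_of_pos (by norm_num) _
    positivity
  have h42 : (4:ℝ) ^ ((1:ℝ)/2) = 2 := by
    rw [show (4:ℝ) = 2 ^ (2:ℕ) by norm_num, ← Real.rpow_natCast 2 2,
      ← Real.rpow_mul (by norm_num)]
    norm_num
  have hclt : c < 4 := by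
    have hlt : (4:ℝ) ^ ((1 : ℝ) / (k : ℝ)) < (4:ℝ) ^ ((1:ℝ)/2) := by
      apply Real.rpow_lt_rpow_left_iff (by norm_num : (1:ℝ) < 4) |>.2
      rw [div_lt_div_iff₀ (by positivity) (by norm_num)]
      have : (3:ℝ) ≤ (k:ℝ) := by exact_mod_cast hk
      linarith
    rw [h42] at hlt
    linarith
  -- g is strictly decreasing on Iic 1
  have hanti : StrictAntiOn g (Set.Iic 1) := by
    intro a ha b hb hab
    simp only [Set.mem_Iic] at ha hb
    have hapos : (0:ℝ) < 1 - a := by linarith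
    have h2a : (0:ℝ) < 2 - a := by linarith
    have h2b : (0:ℝ) < 2 - b := by linarith
    have hsq : (b - 2) ^ 2 < (a - 2) ^ 2 := by nlinarith
    have hpowle : (1 - b) ^ (k - 2) ≤ (1 - a) ^ (k - 2) := by
      apply pow_le_pow_left₀ (by linarith) (by linarith)
    rcases eq_or_lt_of_le hb with hb1 | hb1
    · have : g b = 0 := by simp [hg, hb1, zero_pow hk2ne]
      have : 0 < g a := mul_pos (by nlinarith) (pow_pos hapos _)
      simp_all [hg]
    · have hpow : (1 - b) ^ (k - 2) < (1 - a) ^ (k - 2) := by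
        apply pow_lt_pow_left₀ (by linarith) (by linarith) hk2ne
      have hbpos : (0:ℝ) < 1 - b := by linarith
      calc g b = (b - 2) ^ 2 * (1 - b) ^ (k - 2) := rfl
        _ < (a - 2) ^ 2 * (1 - a) ^ (k - 2) := by
            apply mul_lt_mul'' hsq hpow (by positivity) (by positivity)
        _ = g a := rfl
  have hcont : ContinuousOn g (Set.Icc 0 1) := by
    apply Continuous.continuousOn
    fun_prop
  have hg0 : g 0 = 4 := by norm_num [hg]
  have hg1 : g 1 = 0 := by simp [hg, zero_pow hk2ne]
  have hmem : c ∈ Set.Icc (g 1) (g 0) := by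
    rw [hg0, hg1]; exact ⟨le_of_lt hcpos, le_of_lt hclt⟩
  obtain ⟨lam, hlam, hglam⟩ := intermediate_value_Icc' (by norm_num : (0:ℝ) ≤ 1) hcont hmem
  obtain ⟨hlam0, hlam1⟩ := hlam
  have hne0 : lam ≠ 0 := by
    intro h; rw [h, hg0] at hglam; linarith
  have hne1 : lam ≠ 1 := by
    intro h; rw [h, hg1] at hglam; linarith
  refine ⟨lam, lt_of_le_of_ne hlam0 (Ne.symm hne0), lt_of_le_of_ne hlam1 hne1, by
    simp only [hg] at hglam; linarith, ?_⟩
  intro μ hμ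
  have hgμ : g μ = c := by simp only [hg]; linarith
  by_cases hμ1 : μ ≤ 1
  · exact hanti.injOn hμ1 (Set.mem_Iic.2 hlam1) (by rw [hgμ, hglam])
  · exfalso
    push_neg at hμ1
    have hneg : (1 - μ) ^ (k - 2) < 0 := hodd.pow_neg (by linarith)
    have : g μ ≤ 0 := mul_nonpos_of_nonneg_of_nonpos (by positivity) (le_of_lt hneg)
    linarith
end

section
/- Let k ≥ 3 be an integer and let G be a k-uniform hypergraph in which every edge contains a vertex of degree one (a cored hypergraph). If k is even, then G is odd-bipartite: there is a partition of the vertex set V = V₁ ∪ V₂ with V₁, V₂ nonempty and disjoint such that every edge intersects V₁ in an odd number of vertices. -/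
/-! Pick a degree-one vertex in every edge and let `V₁` be the set of picked vertices. An edge
contains no picked vertex other than its own, since that vertex lies in a single edge, so every
edge meets `V₁` in exactly one vertex. As edges have at least two vertices, `V₁` misses a vertex,
so its complement `V₂` is nonempty. -/

open Finset

section Hypergraph

variable {V : Type*} [DecidableEq V] {E : Finset (Finset V)}

theorem eq_of_mem_of_card_filter_mem_eq_one {v : V} {e f : Finset V}
    (hv : #{g ∈ E | v ∈ g} = 1) (he : e ∈ E) (hve : v ∈ e) (hf : f ∈ E) (hvf : v ∈ f) :
    e = f :=
  card_le_one.1 hv.le e (mem_filter.2 ⟨he, hve⟩) f (mem_filter.2 ⟨hf, hvf⟩)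

theorem exists_inter_card_eq_one_of_forall_exists_card_filter_mem_eq_one
    (hcored : ∀ e ∈ E, ∃ v ∈ e, #{f ∈ E | v ∈ f} = 1) :
    ∃ T : Finset V, ∀ e ∈ E, #(e ∩ T) = 1 := by
  choose c hc hdeg using hcored
  refine ⟨E.attach.image fun e => c e.1 e.2, fun e he => card_eq_one.2 ⟨c e he, ?_⟩⟩
  ext v
  simp only [mem_inter, mem_image, mem_attach, true_and, Subtype.exists, mem_singleton]
  constructor
  · rintro ⟨hve, f, hf, rfl⟩
    obtain rfl := eq_of_mem_of_card_filter_mem_eq_one (hdeg f hf) hf (hc f hf) he hve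
    rfl
  · rintro rfl
    exact ⟨hc e he, e, he, rfl⟩

end Hypergraph

theorem stmt_9_general {V : Type} [Fintype V] [DecidableEq V]
    (k : ℕ) (hk : 3 ≤ k)
    (E : Finset (Finset V)) (hE : E.Nonempty)
    (hcard : ∀ e ∈ E, e.card = k)
    (hcored : ∀ e ∈ E, ∃ v ∈ e, (E.filter (fun f => v ∈ f)).card = 1) :
    ∃ V₁ V₂ : Finset V, V₁.Nonempty ∧ V₂.Nonempty ∧ Disjoint V₁ V₂ ∧
      V₁ ∪ V₂ = Finset.univ ∧ ∀ e ∈ E, Odd (e ∩ V₁).card := by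
  obtain ⟨T, hT⟩ := exists_inter_card_eq_one_of_forall_exists_card_filter_mem_eq_one hcored
  obtain ⟨e₀, he₀⟩ := hE
  have hT₀ := hT e₀ he₀
  obtain ⟨v, -, hvT⟩ : ∃ v ∈ e₀, v ∉ T := not_subset.1 fun h => by
    rw [inter_eq_left.2 h, hcard e₀ he₀] at hT₀
    omega
  refine ⟨T, Tᶜ, ?_, ⟨v, mem_compl.2 hvT⟩, disjoint_compl_right, union_compl T, fun e he => ?_⟩
  · exact (card_pos.1 (hT₀ ▸ one_pos)).mono inter_subset_right
  · rw [hT e he]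
    exact odd_one

theorem stmt_9 {V : Type} [Fintype V] [DecidableEq V]
    (k : ℕ) (hk : 3 ≤ k) (hke : Even k)
    (E : Finset (Finset V)) (hE : E.Nonempty)
    (hcard : ∀ e ∈ E, e.card = k)
    (hcored : ∀ e ∈ E, ∃ v ∈ e, (E.filter (fun f => v ∈ f)).card = 1) :
    ∃ V₁ V₂ : Finset V, V₁.Nonempty ∧ V₂.Nonempty ∧ Disjoint V₁ V₂ ∧
      V₁ ∪ V₂ = Finset.univ ∧ ∀ e ∈ E, Odd (e ∩ V₁).card :=
  stmt_9_general k hk E hE hcard hcored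
end

section
/- Let k be odd, let G be a k-uniform hyperstar of size d ≥ 2 with heart vertex 1, let λ ≠ 1 be real, and let x be a nonzero real vector satisfying the Laplacian eigenvalue equations of G: (λ−d)x₁^{k−1} = −∑_{i=1}^d ∏_{s ∈ e_i∖{1}} x_s and (λ−1)x_j^{k−1} = −∏_{s ∈ e(j)∖{j}} x_s for all pendant vertices j. If i, j ≥ 2 lie in the same edge, then x_i = x_j. -/
/-!
Multiplying the eigenvalue equation of a pendant vertex `j` of the edge `e i` by `x j` turns its
right-hand side into `-∏ s ∈ e i, x s`, which does not depend on `j`. Hence `(λ - 1) x_j ^ k` is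
the same for all pendant vertices of `e i`, and since `λ ≠ 1` and `k` is odd, so is `x_j`.
-/

theorem Finset.mul_pow_eq_neg_prod_of_eq_neg_prod_erase {ι R : Type*} [CommRing R]
    [DecidableEq ι] {s : Finset ι} {f : ι → R} {c : ι} (hc : c ∈ s) {a : R} {k : ℕ}
    (hk : k ≠ 0) (h : a * f c ^ (k - 1) = -∏ t ∈ s.erase c, f t) :
    a * f c ^ k = -∏ t ∈ s, f t := by
  rw [← Nat.sub_add_cancel (Nat.one_le_iff_ne_zero.mpr hk), pow_succ, ← mul_assoc, h, neg_mul,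
    Finset.prod_erase_mul _ _ hc]

theorem stmt_12_general {V : Type} [DecidableEq V] (k d : ℕ) (hko : Odd k)
    (v₀ : V) (e : Fin d → Finset V)
    (lam : ℝ) (hlam : lam ≠ 1) (x : V → ℝ)
    (heq : ∀ i, ∀ j ∈ (e i).erase v₀,
      (lam - 1) * x j ^ (k - 1) = -∏ s ∈ (e i).erase j, x s) :
    ∀ i, ∀ a ∈ (e i).erase v₀, ∀ b ∈ (e i).erase v₀, x a = x b := by
  intro i a ha b hb
  have hpow : ∀ c ∈ (e i).erase v₀, (lam - 1) * x c ^ k = -∏ s ∈ e i, x s := fun c hc =>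
    Finset.mul_pow_eq_neg_prod_of_eq_neg_prod_erase (Finset.mem_of_mem_erase hc)
      hko.pos.ne' (heq i c hc)
  refine hko.strictMono_pow.injective (mul_left_cancel₀ (sub_ne_zero.mpr hlam) ?_)
  rw [hpow a ha, hpow b hb]

theorem stmt_12 {V : Type} [DecidableEq V] (k d : ℕ) (hk : 3 ≤ k) (hko : Odd k) (hd : 2 ≤ d)
    (v₀ : V) (e : Fin d → Finset V)
    (hcard : ∀ i, (e i).card = k) (hheart : ∀ i, v₀ ∈ e i)
    (hint : ∀ i j, i ≠ j → e i ∩ e j = {v₀})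
    (lam : ℝ) (hlam : lam ≠ 1) (x : V → ℝ) (hx : x ≠ 0)
    (heq₀ : (lam - d) * x v₀ ^ (k - 1) =
      -∑ i, ∏ s ∈ (e i).erase v₀, x s)
    (heq : ∀ i, ∀ j ∈ (e i).erase v₀,
      (lam - 1) * x j ^ (k - 1) = -∏ s ∈ (e i).erase j, x s) :
    ∀ i, ∀ a ∈ (e i).erase v₀, ∀ b ∈ (e i).erase v₀, x a = x b :=
  stmt_12_general k d hko v₀ e lam hlam x heq
end

section
/- Let G be a k-uniform hyperstar of size d ≥ 2 with heart vertex 1 and edges e_1,…,e_d. A nonzero real vector x satisfies the Laplacian H-eigenvalue equations for eigenvalue λ = 1 if and only if x₁ = 0 and ∑_{i=1}^d ∏_{s ∈ e_i∖{1}} x_s = 0. -/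
/-! If `x v₀ ≠ 0`, each pendant equation `∏_{e_i ∖ {j}} x = 0` has its vanishing factor at a
pendant vertex, which then also kills the branch product `∏_{e_i ∖ {v₀}} x`; so either the heart
coordinate vanishes or every branch product does. Since `d ≠ 1`, the heart equation
`(1 - d) x_{v₀}^{k-1} = -∑_i ∏_{e_i ∖ {v₀}} x` makes `x v₀ = 0` equivalent to the vanishing of
the sum, and in both cases both conditions hold. Conversely `x v₀ = 0` is a factor of every
pendant product. -/

open Finset

theorem Finset.prod_erase_eq_zero_of_prod_erase_eq_zero {ι R : Type*} [DecidableEq ι]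
    [CommMonoidWithZero R] [Nontrivial R] [NoZeroDivisors R] {s : Finset ι} {f : ι → R}
    {a b : ι} (hb : ∏ i ∈ s.erase b, f i = 0) (ha : f a ≠ 0) : ∏ i ∈ s.erase a, f i = 0 := by
  obtain ⟨t, ht, hft⟩ := prod_eq_zero_iff.mp hb
  have hta : t ≠ a := fun h => ha (h ▸ hft)
  exact prod_eq_zero (mem_erase.mpr ⟨hta, (mem_erase.mp ht).2⟩) hft

theorem eq_zero_iff_of_mul_pow_eq_neg {R : Type*} [CommRing R] [NoZeroDivisors R]
    {c a S : R} {n : ℕ} (hc : c ≠ 0) (hn : n ≠ 0) (h : c * a ^ n = -S) : a = 0 ↔ S = 0 := by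
  rw [← pow_eq_zero_iff hn, ← mul_eq_zero_iff_left hc, h, neg_eq_zero]

section Hyperstar

variable {V : Type*} [DecidableEq V] {d : ℕ} {v₀ : V} {e : Fin d → Finset V} {x : V → ℝ}

theorem heart_eq_zero_or_forall_branch_prod_eq_zero
    (hpend : ∀ i, ((e i).erase v₀).Nonempty)
    (h : ∀ i, ∀ j ∈ (e i).erase v₀, ∏ s ∈ (e i).erase j, x s = 0) :
    x v₀ = 0 ∨ ∀ i, ∏ s ∈ (e i).erase v₀, x s = 0 := by
  refine or_iff_not_imp_left.mpr fun hv i => ?_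
  obtain ⟨j, hj⟩ := hpend i
  exact prod_erase_eq_zero_of_prod_erase_eq_zero (h i j hj) hv

theorem pendant_prod_eq_zero_of_heart_eq_zero (hheart : ∀ i, v₀ ∈ e i) (hv : x v₀ = 0)
    (i : Fin d) {j : V} (hj : j ∈ (e i).erase v₀) : ∏ s ∈ (e i).erase j, x s = 0 :=
  prod_eq_zero (mem_erase.mpr ⟨(mem_erase.mp hj).1.symm, hheart i⟩) hv

end Hyperstar

theorem stmt_13_general {V : Type} [DecidableEq V] (k d : ℕ) (hk : 3 ≤ k) (hd : 2 ≤ d)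
    (v₀ : V) (e : Fin d → Finset V)
    (hcard : ∀ i, (e i).card = k) (hheart : ∀ i, v₀ ∈ e i)
    (x : V → ℝ) :
    (((1 : ℝ) - d) * x v₀ ^ (k - 1) = -∑ i, ∏ s ∈ (e i).erase v₀, x s ∧
      ∀ i, ∀ j ∈ (e i).erase v₀, (0 : ℝ) = -∏ s ∈ (e i).erase j, x s) ↔
    (x v₀ = 0 ∧ ∑ i, ∏ s ∈ (e i).erase v₀, x s = 0) := by
  constructor
  · rintro ⟨hheart_eq, hpend_eq⟩
    have hd1 : (1 : ℝ) - d ≠ 0 := by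
      have : (2 : ℝ) ≤ d := by exact_mod_cast hd
      linarith
    have hiff := eq_zero_iff_of_mul_pow_eq_neg hd1 (by omega) hheart_eq
    have hpend : ∀ i, ((e i).erase v₀).Nonempty := fun i =>
      Nontrivial.erase_nonempty (one_lt_card_iff_nontrivial.mp (by rw [hcard]; omega))
    rcases heart_eq_zero_or_forall_branch_prod_eq_zero hpend
      (fun i j hj => neg_eq_zero.mp (hpend_eq i j hj).symm) with hv | hbranch
    · exact ⟨hv, hiff.mp hv⟩
    · have hsum := sum_eq_zero fun i (_ : i ∈ univ) => hbranch i
      exact ⟨hiff.mpr hsum, hsum⟩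
  · rintro ⟨hv, hsum⟩
    refine ⟨by rw [hv, hsum, zero_pow (by omega), mul_zero, neg_zero], fun i j hj => ?_⟩
    rw [pendant_prod_eq_zero_of_heart_eq_zero hheart hv i hj, neg_zero]

theorem stmt_13 {V : Type} [DecidableEq V] (k d : ℕ) (hk : 3 ≤ k) (hd : 2 ≤ d)
    (v₀ : V) (e : Fin d → Finset V)
    (hcard : ∀ i, (e i).card = k) (hheart : ∀ i, v₀ ∈ e i)
    (hint : ∀ i j, i ≠ j → e i ∩ e j = {v₀})
    (x : V → ℝ) (hx : x ≠ 0) :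
    (((1 : ℝ) - d) * x v₀ ^ (k - 1) = -∑ i, ∏ s ∈ (e i).erase v₀, x s ∧
      ∀ i, ∀ j ∈ (e i).erase v₀, (0 : ℝ) = -∏ s ∈ (e i).erase j, x s) ↔
    (x v₀ = 0 ∧ ∑ i, ∏ s ∈ (e i).erase v₀, x s = 0) :=
  stmt_13_general k d hk hd v₀ e hcard hheart x
end

section
/- Let k ≥ 3, let λ ≠ 1 be real, let e be a set of k indices containing two distinguished (cored) indices i and j, and suppose x is a real vector satisfying λ x_i^{k−1} = x_i^{k−1} − x_j ∏_{s∈e∖{i,j}} x_s and λ x_j^{k−1} = x_j^{k−1} − x_i ∏_{s∈e∖{i,j}} x_s. Then |x_i| = |x_j|, and if k is odd then x_i = x_j. -/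
theorem stmt_15 {ι : Type} [DecidableEq ι] (k : ℕ) (hk : 3 ≤ k)
    (lam : ℝ) (hlam : lam ≠ 1) (e : Finset ι) (i j : ι)
    (hi : i ∈ e) (hj : j ∈ e) (hij : i ≠ j) (hcard : e.card = k) (x : ι → ℝ)
    (heqi : lam * x i ^ (k - 1) = x i ^ (k - 1) - x j * ∏ s ∈ (e.erase i).erase j, x s)
    (heqj : lam * x j ^ (k - 1) = x j ^ (k - 1) - x i * ∏ s ∈ (e.erase i).erase j, x s) :
    |x i| = |x j| ∧ (Odd k → x i = x j) := by
  have hk1 : k - 1 + 1 = k := by omega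
  have h1 : (lam - 1) * x i ^ k = (lam - 1) * x j ^ k := by
    have hi' := congrArg (· * x i) heqi
    have hj' := congrArg (· * x j) heqj
    rw [← hk1]
    ring_nf
    ring_nf at hi' hj'
    nlinarith [hi', hj']
  have h2 : x i ^ k = x j ^ k := by
    have : lam - 1 ≠ 0 := sub_ne_zero.mpr hlam
    exact mul_left_cancel₀ this h1
  constructor
  · have : |x i| ^ k = |x j| ^ k := by rw [← abs_pow, ← abs_pow, h2]
    exact (pow_left_inj₀ (abs_nonneg _) (abs_nonneg _) (by omega : k ≠ 0)).mp this
  · intro hodd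
    exact hodd.strictMono_pow.injective h2
end

section
/- For every odd integer k ≥ 3, the equation [(λ−2)(1−λ)^{k−1} + 1]²(1−λ)^k = 1 has λ = 0 as a solution, and it has no solution with λ < 0 and no solution with 0 < λ < 1. -/
theorem stmt_17 (k : ℕ) (hk : 3 ≤ k) (hko : Odd k) :
    ((((0 : ℝ) - 2) * (1 - 0) ^ (k - 1) + 1) ^ 2 * (1 - 0) ^ k = 1) ∧
    (∀ lam : ℝ, lam < 0 →
      ((lam - 2) * (1 - lam) ^ (k - 1) + 1) ^ 2 * (1 - lam) ^ k ≠ 1) ∧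
    (∀ lam : ℝ, 0 < lam → lam < 1 →
      ((lam - 2) * (1 - lam) ^ (k - 1) + 1) ^ 2 * (1 - lam) ^ k ≠ 1) := by
  refine ⟨by norm_num, ?_, ?_⟩
  · intro lam hl
    have h1 : (1 : ℝ) < 1 - lam := by linarith
    have hne : k - 1 ≠ 0 := by omega
    have ht : (1 : ℝ) < (1 - lam) ^ (k - 1) := one_lt_pow₀ h1 hne
    have hp : (1 : ℝ) < (1 - lam) ^ k := one_lt_pow₀ h1 (by omega)
    have ha : (lam - 2) * (1 - lam) ^ (k - 1) + 1 < -1 := by nlinarith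
    have ha2 : (1 : ℝ) < ((lam - 2) * (1 - lam) ^ (k - 1) + 1) ^ 2 := by nlinarith
    nlinarith
  · intro lam h0 h1
    have hb0 : (0 : ℝ) < 1 - lam := by linarith
    have hb1 : (1 : ℝ) - lam < 1 := by linarith
    have hne : k - 1 ≠ 0 := by omega
    have ht0 : (0 : ℝ) < (1 - lam) ^ (k - 1) := pow_pos hb0 _
    have ht1 : (1 - lam) ^ (k - 1) < 1 := pow_lt_one₀ (le_of_lt hb0) hb1 hne
    have hp0 : (0 : ℝ) < (1 - lam) ^ k := pow_pos hb0 _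
    have hp1 : (1 - lam) ^ k < 1 := pow_lt_one₀ (le_of_lt hb0) hb1 (by omega)
    have ha1 : (lam - 2) * (1 - lam) ^ (k - 1) + 1 < 1 := by nlinarith
    have ha2 : -1 < (lam - 2) * (1 - lam) ^ (k - 1) + 1 := by nlinarith
    have hsq : ((lam - 2) * (1 - lam) ^ (k - 1) + 1) ^ 2 < 1 := by nlinarith
    nlinarith [sq_nonneg ((lam - 2) * (1 - lam) ^ (k - 1) + 1)]
end
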